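/- arXiv:2003.01331 — 2 statements merged into one kernel-verified Lean document; each statement's English description precedes it below -/
import Mathlib

section
/- If two Datalog programs P and P′ (instantiations of the same sketch via σ and σ′ with σ′ ⊨ Generalize(σ, φ) for an MDP φ of P against expected output O on input I) satisfy Π_φ(⟦P⟧_I) = Π_φ(⟦P′⟧_I) for all inputs I, and φ is a distinguishing projection for (⟦P⟧_I, O), then the blocking constraint ¬Generalize(σ, φ) added to the sketch encoding excludes only assignments whose corresponding programs fail the example (I, O); i.e., every assignment σ″ satisfying Generalize(σ, φ) instantiates a program P″ with ⟦P″⟧_I ≠ O. -/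
/-- Relational projection of an instance onto a set `L` of attributes. -/
def proj {A D : Type*} (L : Set A) (O : Set (A → D)) : Set (L → D) :=
  (fun t : A → D => fun a : L => t a.1) '' O

/-- The generalization condition `Generalize(σ, φ)`: an assignment `σ''`
preserves the equality pattern of `σ` and agrees with `σ` on the holes mapped
to head variables of the attributes in `φ` (represented by `phiHoles`). -/
def Generalize {Hole Var : Type*} (σ : Hole → Var) (phiHoles : Set Hole)
    (σ'' : Hole → Var) : Prop :=
  (∀ x y : Hole, σ'' x = σ'' y ↔ σ x = σ y) ∧ ∀ x ∈ phiHoles, σ'' x = σ x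

/-- pruning soundness: assuming the projection-invariance lemma
for `Generalize(σ, φ)`, if `φ` is a distinguishing projection for
`(⟦P⟧_I, O)`, then every assignment `σ''` satisfying `Generalize(σ, φ)`
instantiates a program whose output on `I` differs from `O`; hence the blocking
constraint `¬Generalize(σ, φ)` excludes only incorrect programs. -/
theorem analyze_pruning_sound
    {Hole Var A D Input : Type*}
    (sem : (Hole → Var) → Input → Set (A → D))
    (σ : Hole → Var) (φ : Set A) (phiHoles : Set Hole)
    (I : Input) (O : Set (A → D))
    (hlemma : ∀ σ'' : Hole → Var, Generalize σ phiHoles σ'' →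
      ∀ J : Input, proj φ (sem σ'' J) = proj φ (sem σ J))
    (hdist : proj φ (sem σ I) ≠ proj φ O) :
    ∀ σ'' : Hole → Var, Generalize σ phiHoles σ'' → sem σ'' I ≠ O := by
  intro σ'' hgen hcorrect
  apply hdist
  rw [← hlemma σ'' hgen I, hcorrect]
end

section
/- In the BFS lattice exploration of subsets of a finite attribute set A ordered by size, if a set L of size k is processed only when all of its strict subsets either have been determined non-distinguishing or some strict subset is in Δ, then the following invariant holds upon adding L to Δ: for every A′ ⊊ L, if some element of Δ is a subset of A′ then A′ would have prevented L's addition; hence all strict subsets of L are non-distinguishing. -/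
theorem bfs_invariant_minimal_general {A : Type*}
    (D : Set A → Prop)
    (Δ : Set (Set A))
    (hmem : ∀ L ∈ Δ, D L)
    (hnosub : ∀ L ∈ Δ, ∀ M ∈ Δ, ¬ M ⊂ L)
    (hcomplete : ∀ L ∈ Δ, ∀ L' : Set A, L' ⊂ L → D L' →
      L' ∈ Δ ∨ ∃ M ∈ Δ, M ⊂ L') :
    ∀ L ∈ Δ, D L ∧ ∀ L' : Set A, L' ⊂ L → ¬ D L' := by
  intro L hL
  refine ⟨hmem L hL, fun L' hL' hD => ?_⟩
  rcases hcomplete L hL L' hL' hD with hL'Δ | ⟨M, hM, hML'⟩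
  · exact hnosub L hL L' hL'Δ hL'
  · exact hnosub L hL M hM (hML'.trans hL')

/-- invariant of the BFS lattice exploration.  Let `D` be a
monotone "distinguishing" predicate on subsets of a finite set `A`, and let
`Δ` be the collection maintained by the procedure, characterized by:
every member of `Δ` distinguishes; no member of `Δ` is a strict subset of
another member; and (completeness of processing in cardinality order) every
distinguishing strict subset `L'` of a member of `Δ` is itself in `Δ` or has a
member of `Δ` as a strict subset.  Then every `L ∈ Δ` satisfies `D L` and
`¬ D L'` for every strict subset `L' ⊊ L`, i.e. `Δ` contains only minimal
distinguishing sets. -/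
theorem bfs_invariant_minimal {A : Type*} [Fintype A]
    (D : Set A → Prop)
    (hmono : ∀ L' L : Set A, L' ⊆ L → D L' → D L)
    (Δ : Set (Set A))
    (hmem : ∀ L ∈ Δ, D L)
    (hnosub : ∀ L ∈ Δ, ∀ M ∈ Δ, ¬ M ⊂ L)
    (hcomplete : ∀ L ∈ Δ, ∀ L' : Set A, L' ⊂ L → D L' →
      L' ∈ Δ ∨ ∃ M ∈ Δ, M ⊂ L') :
    ∀ L ∈ Δ, D L ∧ ∀ L' : Set A, L' ⊂ L → ¬ D L' :=
  bfs_invariant_minimal_general D Δ hmem hnosub hcomplete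
end
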